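/- With the notation of the discretized killed diffusion on the torus, let μ₀ be a probability measure on 𝕋ᵈ and define the nonlinear Markov chain of laws by η̃₀ = μ₀ and η̃_{n+1}(A) = ∫_{𝕋ᵈ} Q_{η̃_n}(x, A) η̃_n(dx) for all Borel A. Then for every n ≥ 0, η̃_n = μ₀K̃ⁿ / (μ₀K̃ⁿ)(𝕋ᵈ), i.e. η̃_n equals the law of the discretized killed chain at time n conditioned on survival up to time n: η̃_n(A) = (∫ K̃ⁿ(x,A) μ₀(dx)) / (∫ K̃ⁿ(x,𝕋ᵈ) μ₀(dx)). -/

import Mathlib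

open MeasureTheory ProbabilityTheory ENNReal

/-- The `d`-dimensional flat torus `𝕋ᵈ = (ℝ/ℤ)ᵈ`. -/
abbrev Torus (d : ℕ) := Fin d → AddCircle (1 : ℝ)

/-- The quotient map `q : ℝᵈ → 𝕋ᵈ`. -/
noncomputable def torusQuot (d : ℕ) (x : Fin d → ℝ) : Torus d := fun i => (x i : AddCircle (1 : ℝ))

/-- The canonical lift `𝕋ᵈ → ℝᵈ` with coordinates in `[0,1)`. -/
noncomputable def torusLift (d : ℕ) (x : Torus d) : Fin d → ℝ :=
  fun i => (AddCircle.equivIco 1 0 (x i) : ℝ)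

/-- The Gaussian measure `𝒩(m, γ I_d)` on `ℝᵈ` (product of one-dimensional Gaussians). -/
noncomputable def gaussPi (d : ℕ) (m : Fin d → ℝ) (γ : ℝ) : Measure (Fin d → ℝ) :=
  Measure.pi fun i => gaussianReal (m i) γ.toNNReal

/-- The Euler–Maruyama kernel `K^γ` on the torus: `K^γ(x,·)` is the pushforward under the
quotient map of the Gaussian `𝒩(x̃ + γ b(x), γ I_d)`, `x̃` being the canonical lift of `x`. -/
noncomputable def eulerKernel (d : ℕ) (b : Torus d → Fin d → ℝ) (γ : ℝ) (x : Torus d) :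
    Measure (Torus d) :=
  (gaussPi d (torusLift d x + γ • b x) γ).map (torusQuot d)

/-- The sub-Markov "move then survive" kernel
`K̃(x,dy) = (1 − p(y)) K^γ(x,dy) = e^{−γλ(y)} K^γ(x,dy)`. -/
noncomputable def killedKernel (d : ℕ) (b : Torus d → Fin d → ℝ) (γ : ℝ)
    (lam : Torus d → ℝ) (x : Torus d) : Measure (Torus d) :=
  (eulerKernel d b γ x).withDensity fun y => ENNReal.ofReal (Real.exp (-γ * lam y))

/-- The resurrection (Markov) kernel
`Q_μ(x,·) = K̃(x,·) + (1 − K̃(x,𝕋ᵈ)) · μK̃(·)/μK̃(𝕋ᵈ)`. -/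
noncomputable def resKernel (d : ℕ) (b : Torus d → Fin d → ℝ) (γ : ℝ)
    (lam : Torus d → ℝ) (μ : Measure (Torus d)) (x : Torus d) : Measure (Torus d) :=
  killedKernel d b γ lam x +
    (1 - killedKernel d b γ lam x Set.univ) •
      ((μ.bind (killedKernel d b γ lam)) Set.univ)⁻¹ • μ.bind (killedKernel d b γ lam)

/-- The `n`-fold iterate of a kernel `M` (as a map `E → Measure E`). -/
noncomputable def kIter {E : Type*} [MeasurableSpace E] (M : E → Measure E) :
    ℕ → E → Measure E
  | 0 => fun x => Measure.dirac x
  | n + 1 => fun x => (M x).bind (kIter M n)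
open scoped NNReal

/-! Under `Q_ν` the mass `1 − K̃(x,𝕋ᵈ)` killed at `x` is put back according to `νK̃/νK̃(𝕋ᵈ)`.
For a probability measure `ν` the total killed mass is `1 − νK̃(𝕋ᵈ)`, so
`νQ_ν = νK̃ + (1 − νK̃(𝕋ᵈ)) · νK̃/νK̃(𝕋ᵈ) = νK̃/νK̃(𝕋ᵈ)`.
Normalization ignores scalar factors and `K̃` is linear, so induction on `n` gives
`η̃ₙ = μ₀K̃ⁿ/μ₀K̃ⁿ(𝕋ᵈ)`; since `0 < K̃(x,𝕋ᵈ) ≤ 1`, every mass `μ₀K̃ⁿ(𝕋ᵈ)` lies in `(0,1]`,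
so no normalization divides by `0` or `∞`. -/

open Set

namespace MeasureTheory

variable {E F : Type*} [MeasurableSpace E] [MeasurableSpace F]

lemma lintegral_ne_zero_of_forall_ne_zero {μ : Measure E} (hμ : μ ≠ 0) {f : E → ℝ≥0∞}
    (hf : AEMeasurable f μ) (h : ∀ x, f x ≠ 0) : ∫⁻ x, f x ∂μ ≠ 0 := by
  rw [Ne, lintegral_eq_zero_iff' hf]
  intro hzero
  exact hμ (ae_eq_bot.1 (Filter.eventually_false_iff_eq_bot.1 (hzero.mono fun x hx => h x hx)))

lemma Measurable.withDensity_right {κ : F → Measure E} (hκ : Measurable κ) {f : E → ℝ≥0∞}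
    (hf : Measurable f) : Measurable fun x => (κ x).withDensity f := by
  refine Measure.measurable_of_measurable_coe _ fun s hs => ?_
  simp_rw [withDensity_apply f hs, ← lintegral_indicator hs]
  exact (Measure.measurable_lintegral (hf.indicator hs)).comp hκ

namespace Measure

lemma measurable_map_add_right {G : Type*} [MeasurableSpace G] [Add G] [MeasurableAdd₂ G]
    (ρ : Measure G) [SFinite ρ] {m : F → G} (hm : Measurable m) :
    Measurable fun x => ρ.map (· + m x) := by
  refine measurable_of_measurable_coe _ fun s hs => ?_
  have hpre : MeasurableSet {p : F × G | p.2 + m p.1 ∈ s} :=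
    (measurable_snd.add (hm.comp measurable_fst)) hs
  simp_rw [map_apply (measurable_add_const _) hs]
  exact measurable_measure_prodMk_left hpre

noncomputable def normalize (μ : Measure E) : Measure E := (μ univ)⁻¹ • μ

lemma isProbabilityMeasure_normalize {μ : Measure E} (h0 : μ ≠ 0) (hfin : μ univ ≠ ∞) :
    IsProbabilityMeasure (normalize μ) :=
  ⟨ENNReal.inv_mul_cancel (measure_univ_ne_zero.2 h0) hfin⟩

lemma normalize_smul (μ : Measure E) {c : ℝ≥0∞} (hc0 : c ≠ 0) (hc : c ≠ ∞) :
    normalize (c • μ) = normalize μ := by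
  rw [normalize, normalize, smul_apply, smul_eq_mul, smul_smul,
    ENNReal.mul_inv (Or.inl hc0) (Or.inl hc), mul_assoc, mul_left_comm,
    ENNReal.inv_mul_cancel hc0 hc, mul_one]

lemma bind_univ_le {M : E → Measure F} (hM : Measurable M) (hM1 : ∀ x, M x univ ≤ 1)
    (μ : Measure E) : μ.bind M univ ≤ μ univ := by
  rw [bind_apply .univ hM.aemeasurable]
  calc ∫⁻ x, M x univ ∂μ ≤ ∫⁻ _, 1 ∂μ := lintegral_mono hM1
    _ = μ univ := lintegral_one

lemma bind_ne_zero {M : E → Measure F} (hM : Measurable M) (hM0 : ∀ x, M x ≠ 0)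
    {μ : Measure E} (hμ : μ ≠ 0) : μ.bind M ≠ 0 := by
  rw [← measure_univ_ne_zero, bind_apply .univ hM.aemeasurable]
  exact lintegral_ne_zero_of_forall_ne_zero hμ
    ((measurable_coe .univ).comp hM).aemeasurable fun x => measure_univ_ne_zero.2 (hM0 x)

lemma bind_add_smul {M : E → Measure F} (hM : Measurable M) {f : E → ℝ≥0∞} (hf : Measurable f)
    (μ : Measure E) (ρ : Measure F) :
    μ.bind (fun x => M x + f x • ρ) = μ.bind M + (∫⁻ x, f x ∂μ) • ρ := by
  have hfρ : Measurable fun x => f x • ρ :=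
    measurable_of_measurable_coe _ fun s hs => by
      simpa only [smul_apply, smul_eq_mul] using hf.mul_const (ρ s)
  ext s hs
  rw [bind_apply (f := fun x => M x + f x • ρ) hs (hM.add hfρ).aemeasurable]
  simp only [add_apply, smul_apply, smul_eq_mul]
  rw [bind_apply hs hM.aemeasurable, lintegral_add_left (f := fun x => M x s) ((measurable_coe hs).comp hM),
    lintegral_mul_const _ hf]

noncomputable def resurrect (M : E → Measure E) (μ : Measure E) (x : E) : Measure E :=
  M x + (1 - M x univ) • normalize (μ.bind M)

lemma bind_resurrect {M : E → Measure E} (hM : Measurable M) (hM1 : ∀ x, M x univ ≤ 1)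
    (ν : Measure E) [IsProbabilityMeasure ν] (h0 : ν.bind M ≠ 0) :
    ν.bind (resurrect M ν) = normalize (ν.bind M) := by
  have hmass : ν.bind M univ = ∫⁻ x, M x univ ∂ν := bind_apply .univ hM.aemeasurable
  have hMu : Measurable fun x => M x univ := (measurable_coe .univ).comp hM
  have hfin : ∫⁻ x, M x univ ∂ν ≠ ∞ := by
    rw [← hmass]; exact ((bind_univ_le hM hM1 ν).trans_lt (measure_lt_top ν univ)).ne
  have hkilled : ∫⁻ x, (1 - M x univ) ∂ν = 1 - ν.bind M univ := by
    rw [lintegral_sub hMu hfin (ae_of_all _ hM1), lintegral_one, measure_univ, hmass]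
  set t := ν.bind M univ
  have ht1 : t ≤ 1 := (bind_univ_le hM hM1 ν).trans_eq measure_univ
  have ht0 : t ≠ 0 := measure_univ_ne_zero.2 h0
  have htop : t ≠ ∞ := ht1.trans_lt ENNReal.one_lt_top |>.ne
  have hscalar : 1 + (1 - t) * t⁻¹ = t⁻¹ := calc
    1 + (1 - t) * t⁻¹ = (t + (1 - t)) * t⁻¹ := by rw [add_mul, ENNReal.mul_inv_cancel ht0 htop]
    _ = t⁻¹ := by rw [add_tsub_cancel_of_le ht1, one_mul]
  unfold resurrect
  rw [bind_add_smul hM (f := fun x => 1 - M x univ) (measurable_const.sub hMu), hkilled,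
    normalize, smul_smul]
  calc ν.bind M + ((1 - t) * t⁻¹) • ν.bind M = (1 + (1 - t) * t⁻¹) • ν.bind M := by
        rw [add_smul, one_smul]
    _ = t⁻¹ • ν.bind M := by rw [hscalar]

end Measure

end MeasureTheory

section Iterates

variable {E : Type*} [MeasurableSpace E] {M : E → Measure E}

lemma measurable_kIter (hM : Measurable M) (n : ℕ) : Measurable (kIter M n) := by
  induction n with
  | zero => exact Measure.measurable_dirac
  | succ n ih => exact (Measure.measurable_bind' ih).comp hM

lemma bind_kIter_zero (μ : Measure E) : μ.bind (kIter M 0) = μ := Measure.bind_dirac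

lemma bind_kIter_succ (hM : Measurable M) (μ : Measure E) (n : ℕ) :
    μ.bind (kIter M (n + 1)) = (μ.bind (kIter M n)).bind M := by
  have hleft : ∀ μ : Measure E, ∀ n, μ.bind (kIter M (n + 1)) = (μ.bind M).bind (kIter M n) :=
    fun μ n => (Measure.bind_bind hM.aemeasurable (measurable_kIter hM n).aemeasurable).symm
  induction n generalizing μ with
  | zero => rw [hleft, bind_kIter_zero, bind_kIter_zero]
  | succ n ih => rw [hleft, ih, ← hleft]

lemma bind_kIter_univ_le (hM : Measurable M) (hM1 : ∀ x, M x univ ≤ 1) (μ : Measure E)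
    (n : ℕ) : μ.bind (kIter M n) univ ≤ μ univ := by
  induction n with
  | zero => rw [bind_kIter_zero]
  | succ n ih => exact (bind_kIter_succ hM μ n ▸ Measure.bind_univ_le hM hM1 _).trans ih

lemma bind_kIter_ne_zero (hM : Measurable M) (hM0 : ∀ x, M x ≠ 0) {μ : Measure E} (hμ : μ ≠ 0)
    (n : ℕ) : μ.bind (kIter M n) ≠ 0 := by
  induction n with
  | zero => rwa [bind_kIter_zero]
  | succ n ih => exact bind_kIter_succ hM μ n ▸ Measure.bind_ne_zero hM hM0 ih

end Iterates

section Torus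

variable {d : ℕ}

lemma measurable_torusLift : Measurable (torusLift d) :=
  measurable_pi_lambda _ fun i => measurable_subtype_coe.comp <|
    (AddCircle.measurableEquivIco 1 0).measurable.comp (measurable_pi_apply i)

lemma torusQuot_torusLift (x : Torus d) : torusQuot d (torusLift d x) = x :=
  funext fun i => (AddCircle.equivIco 1 0).symm_apply_apply (x i)

lemma measurable_torusQuot : Measurable (torusQuot d) :=
  measurable_pi_lambda _ fun i => AddCircle.measurable_mk'.comp (measurable_pi_apply i)

lemma measurable_of_comp_torusQuot {β : Type*} [MeasurableSpace β] {f : Torus d → β}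
    (hf : Measurable (f ∘ torusQuot d)) : Measurable f := by
  have hf_eq : f = (f ∘ torusQuot d) ∘ torusLift d :=
    funext fun x => by simp only [Function.comp_apply, torusQuot_torusLift]
  exact hf_eq ▸ hf.comp measurable_torusLift

instance (m : Fin d → ℝ) (γ : ℝ) : IsProbabilityMeasure (gaussPi d m γ) := by
  unfold gaussPi; infer_instance

lemma gaussPi_eq_map_add (m : Fin d → ℝ) (γ : ℝ) :
    gaussPi d m γ = (gaussPi d 0 γ).map (· + m) := by
  have := Measure.pi_map_pi (μ := fun i => gaussianReal 0 γ.toNNReal)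
    (f := fun i y => y + m i) fun i => (measurable_add_const (m i)).aemeasurable
  simp only [gaussianReal_map_add_const, zero_add] at this
  exact this.symm

instance (b : Torus d → Fin d → ℝ) (γ : ℝ) (x : Torus d) :
    IsProbabilityMeasure (eulerKernel d b γ x) :=
  Measure.isProbabilityMeasure_map measurable_torusQuot.aemeasurable

lemma measurable_eulerKernel {b : Torus d → Fin d → ℝ} (hb : Measurable b) (γ : ℝ) :
    Measurable (eulerKernel d b γ) := by
  have hmean : Measurable fun x => torusLift d x + γ • b x :=
    measurable_torusLift.add (hb.const_smul γ)
  have hK : eulerKernel d b γ =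
      fun x => ((gaussPi d 0 γ).map (· + (torusLift d x + γ • b x))).map (torusQuot d) :=
    funext fun x => by rw [eulerKernel, gaussPi_eq_map_add]
  rw [hK]
  exact (Measure.measurable_map _ measurable_torusQuot).comp
    ((gaussPi d 0 γ).measurable_map_add_right hmean)

variable {b : Torus d → Fin d → ℝ} {γ : ℝ} {lam : Torus d → ℝ}

lemma measurable_killedKernel (hb : Measurable b) (hlam : Measurable lam) :
    Measurable (killedKernel d b γ lam) :=
  (measurable_eulerKernel hb γ).withDensity_right (by fun_prop)

lemma killedKernel_univ_le_one (hγ : 0 ≤ γ) (hlam0 : ∀ x, 0 ≤ lam x) (x : Torus d) :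
    killedKernel d b γ lam x univ ≤ 1 := by
  rw [killedKernel, withDensity_apply _ .univ, Measure.restrict_univ]
  calc ∫⁻ y, ENNReal.ofReal (Real.exp (-γ * lam y)) ∂eulerKernel d b γ x
      ≤ ∫⁻ _, 1 ∂eulerKernel d b γ x := lintegral_mono fun y => ENNReal.ofReal_le_one.2 <|
        Real.exp_le_one_iff.2 (by nlinarith [hlam0 y])
    _ = 1 := by simp

lemma killedKernel_ne_zero (hlam : Measurable lam) (x : Torus d) :
    killedKernel d b γ lam x ≠ 0 := by
  rw [← Measure.measure_univ_ne_zero, killedKernel, withDensity_apply _ .univ,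
    Measure.restrict_univ]
  exact lintegral_ne_zero_of_forall_ne_zero (IsProbabilityMeasure.ne_zero _)
    (by fun_prop) fun y => (ENNReal.ofReal_pos.2 (Real.exp_pos _)).ne'

lemma resKernel_eq_resurrect : resKernel d b γ lam = Measure.resurrect (killedKernel d b γ lam) :=
  rfl

end Torus

/-- **The nonlinear chain is the discretized killed chain conditioned on survival.**
Starting from a probability measure `μ₀` on `𝕋ᵈ`, the nonlinear chain of laws defined by
`η̃₀ = μ₀` and `η̃_{n+1} = η̃_n Q_{η̃_n}` satisfies, for every `n`,
`η̃_n = μ₀K̃ⁿ / (μ₀K̃ⁿ)(𝕋ᵈ)`, the law at time `n` of the discretized killed chain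
conditioned on survival up to time `n`. -/
theorem nonlinear_chain_eq_conditional_law
    (d : ℕ) (b : Torus d → Fin d → ℝ)
    (hb : ∃ B : (Fin d → ℝ) → Fin d → ℝ, ContDiff ℝ 1 B ∧
      ∀ x : Fin d → ℝ, B x = b (torusQuot d x))
    (γ : ℝ) (hγ : 0 < γ)
    (lam : Torus d → ℝ) (hlam0 : ∀ x, 0 ≤ lam x)
    (L : ℝ≥0) (hlip : LipschitzWith L lam)
    (μ₀ : Measure (Torus d)) (hμ₀ : IsProbabilityMeasure μ₀)
    (η : ℕ → Measure (Torus d)) (hη0 : η 0 = μ₀)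
    (hηrec : ∀ n : ℕ, η (n + 1) = (η n).bind (resKernel d b γ lam (η n))) :
    ∀ n : ℕ,
      η n = ((μ₀.bind (kIter (killedKernel d b γ lam) n)) Set.univ)⁻¹ •
        μ₀.bind (kIter (killedKernel d b γ lam) n) := by
  obtain ⟨B, hB, hBb⟩ := hb
  have hbm : Measurable b := measurable_of_comp_torusQuot
    ((funext hBb : B = b ∘ torusQuot d) ▸ hB.continuous.measurable)
  have hlam : Measurable lam := hlip.continuous.measurable
  set K := killedKernel d b γ lam
  have hK : Measurable K := measurable_killedKernel hbm hlam
  have hK1 : ∀ x, K x univ ≤ 1 := killedKernel_univ_le_one hγ.le hlam0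
  have hK0 : ∀ x, K x ≠ 0 := killedKernel_ne_zero hlam
  have hν0 (n : ℕ) : μ₀.bind (kIter K n) ≠ 0 := bind_kIter_ne_zero hK hK0 hμ₀.ne_zero n
  have hνfin (n : ℕ) : μ₀.bind (kIter K n) univ ≠ ∞ :=
    ((bind_kIter_univ_le hK hK1 μ₀ n).trans_lt (measure_lt_top μ₀ univ)).ne
  intro n
  change η n = (μ₀.bind (kIter K n)).normalize
  induction n with
  | zero => rw [hη0, bind_kIter_zero, Measure.normalize, measure_univ, inv_one, one_smul]
  | succ n ih =>
    have : IsProbabilityMeasure (η n) :=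
      ih ▸ Measure.isProbabilityMeasure_normalize (hν0 n) (hνfin n)
    have hstep : (η n).bind K = (μ₀.bind (kIter K n) univ)⁻¹ • μ₀.bind (kIter K (n + 1)) := by
      rw [ih, Measure.normalize, Measure.bind_smul, bind_kIter_succ hK]
    rw [hηrec n, resKernel_eq_resurrect, Measure.bind_resurrect hK hK1 (η n)
      (Measure.bind_ne_zero hK hK0 (IsProbabilityMeasure.ne_zero _)), hstep,
      Measure.normalize_smul _ (ENNReal.inv_ne_zero.2 (hνfin n))
        (ENNReal.inv_ne_top.2 (Measure.measure_univ_ne_zero.2 (hν0 n)))]
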